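/- (Harten's lemma) Let a scheme be written in incremental form u_j^{n+1} = u_j^n + C_{j+1/2}(u_{j+1}^n - u_j^n) - D_{j-1/2}(u_j^n - u_{j-1}^n). If for all j, C_{j+1/2} ≥ 0, D_{j+1/2} ≥ 0, and C_{j+1/2} + D_{j+1/2} ≤ 1, then the scheme is TVD: TV(u^{n+1}) ≤ TV(u^n), where TV(u) = Σ_j |u_{j+1} - u_j|. -/
import Mathlib


/-- Harten's lemma: a scheme in incremental form
`u_j^{n+1} = u_j^n + C_{j+1/2}(u_{j+1}^n - u_j^n) - D_{j-1/2}(u_j^n - u_{j-1}^n)`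
with `C_{j+1/2} ≥ 0`, `D_{j+1/2} ≥ 0` and `C_{j+1/2} + D_{j+1/2} ≤ 1` is TVD:
`TV(u^{n+1}) ≤ TV(u^n)` where `TV(u) = Σ_j |u_{j+1} - u_j|`.
Here `C j` and `D j` stand for `C_{j+1/2}` and `D_{j+1/2}`. -/
theorem harten_lemma_tvd
    (u v C D : ℤ → ℝ)
    (hTV : Summable (fun j : ℤ => |u (j + 1) - u j|))
    (hC : ∀ j, 0 ≤ C j) (hD : ∀ j, 0 ≤ D j)
    (hCD : ∀ j, C j + D j ≤ 1)
    (hscheme : ∀ j, v j = u j + C j * (u (j + 1) - u j) - D (j - 1) * (u j - u (j - 1))) :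
    (∑' j : ℤ, |v (j + 1) - v j|) ≤ ∑' j : ℤ, |u (j + 1) - u j| := by
  set Δ : ℤ → ℝ := fun j => |u (j + 1) - u j| with hΔdef
  have hΔ0 : ∀ j, 0 ≤ Δ j := fun j => abs_nonneg _
  have hC1 : ∀ j, C j ≤ 1 := fun j =>
    le_trans (le_add_of_nonneg_right (hD j)) (hCD j)
  have hD1 : ∀ j, D j ≤ 1 := fun j =>
    le_trans (le_add_of_nonneg_left (hC j)) (hCD j)
  have hE0 : ∀ j, 0 ≤ 1 - C j - D j := fun j => by have := hCD j; linarith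
  -- summability of the three pieces
  have hsC : Summable (fun j => C j * Δ j) :=
    hTV.of_nonneg_of_le (fun j => mul_nonneg (hC j) (hΔ0 j))
      (fun j => mul_le_of_le_one_left (hΔ0 j) (hC1 j))
  have hsD : Summable (fun j => D j * Δ j) :=
    hTV.of_nonneg_of_le (fun j => mul_nonneg (hD j) (hΔ0 j))
      (fun j => mul_le_of_le_one_left (hΔ0 j) (hD1 j))
  have hsE : Summable (fun j => (1 - C j - D j) * Δ j) :=
    hTV.of_nonneg_of_le (fun j => mul_nonneg (hE0 j) (hΔ0 j))
      (fun j => mul_le_of_le_one_left (hΔ0 j)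
        (by have := hC j; have := hD j; linarith))
  have hsCs : Summable (fun j : ℤ => C (j + 1) * Δ (j + 1)) :=
    ((Equiv.addRight (1 : ℤ)).summable_iff (f := fun k => C k * Δ k)).mpr hsC
  have hsDs : Summable (fun j : ℤ => D (j - 1) * Δ (j - 1)) :=
    ((Equiv.subRight (1 : ℤ)).summable_iff (f := fun k => D k * Δ k)).mpr hsD
  -- key pointwise bound
  have key : ∀ j : ℤ, |v (j + 1) - v j| ≤
      (1 - C j - D j) * Δ j + C (j + 1) * Δ (j + 1) + D (j - 1) * Δ (j - 1) := by
    intro j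
    have e : v (j + 1) - v j =
        (1 - C j - D j) * (u (j + 1) - u j) + C (j + 1) * (u (j + 1 + 1) - u (j + 1))
          + D (j - 1) * (u j - u (j - 1)) := by
      have h1 := hscheme j
      have h2 := hscheme (j + 1)
      rw [h1, h2]
      have e1 : j + 1 - 1 = j := by ring
      rw [e1]
      ring
    rw [e]
    have habs : ∀ (a b : ℝ), 0 ≤ a → |a * b| = a * |b| := by
      intro a b ha; rw [abs_mul, abs_of_nonneg ha]
    calc |(1 - C j - D j) * (u (j + 1) - u j) + C (j + 1) * (u (j + 1 + 1) - u (j + 1))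
          + D (j - 1) * (u j - u (j - 1))|
        ≤ |(1 - C j - D j) * (u (j + 1) - u j)| + |C (j + 1) * (u (j + 1 + 1) - u (j + 1))|
          + |D (j - 1) * (u j - u (j - 1))| := by
          exact le_trans (abs_add_le _ _) (by gcongr; exact abs_add_le _ _)
      _ = (1 - C j - D j) * Δ j + C (j + 1) * Δ (j + 1) + D (j - 1) * Δ (j - 1) := by
          rw [habs _ _ (hE0 j), habs _ _ (hC (j + 1)), habs _ _ (hD (j - 1))]
          have e2 : j - 1 + 1 = j := by ring
          simp only [hΔdef, e2]
    -- end key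
  have hsLHS : Summable (fun j : ℤ => |v (j + 1) - v j|) :=
    ((hsE.add hsCs).add hsDs).of_nonneg_of_le (fun j => abs_nonneg _) key
  calc (∑' j : ℤ, |v (j + 1) - v j|)
      ≤ ∑' j : ℤ, ((1 - C j - D j) * Δ j + C (j + 1) * Δ (j + 1) + D (j - 1) * Δ (j - 1)) :=
        Summable.tsum_le_tsum key hsLHS ((hsE.add hsCs).add hsDs)
    _ = (∑' j : ℤ, (1 - C j - D j) * Δ j) + (∑' j : ℤ, C (j + 1) * Δ (j + 1))
          + (∑' j : ℤ, D (j - 1) * Δ (j - 1)) := by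
        rw [Summable.tsum_add (hsE.add hsCs) hsDs, Summable.tsum_add hsE hsCs]
    _ = (∑' j : ℤ, (1 - C j - D j) * Δ j) + (∑' j : ℤ, C j * Δ j)
          + (∑' j : ℤ, D j * Δ j) := by
        congr 1
        · congr 1
          exact (Equiv.addRight (1 : ℤ)).tsum_eq (f := fun k => C k * Δ k)
        · exact (Equiv.subRight (1 : ℤ)).tsum_eq (f := fun k => D k * Δ k)
    _ = ∑' j : ℤ, ((1 - C j - D j) * Δ j + C j * Δ j + D j * Δ j) := by
        rw [Summable.tsum_add (hsE.add hsC) hsD, Summable.tsum_add hsE hsC]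
    _ = ∑' j : ℤ, Δ j := by
        congr 1; funext j; ring
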